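/- arXiv:1712.08780 — 2 statements merged into one kernel-verified Lean document; each statement's English description precedes it below -/
import Mathlib

section
/- For any graphs G and H, the Grundy total domination number of the direct product G × H is at least the product of the Grundy total domination numbers of G and H: γ_gr^t(G × H) ≥ γ_gr^t(G) · γ_gr^t(H). -/
open SimpleGraph

/-- A legal open neighborhood sequence in `G`. -/
def IsOpenLegal {α : Type*} (G : SimpleGraph α) (L : List α) : Prop :=
  L.Nodup ∧ ∀ i : Fin L.length, ∃ w, G.Adj (L.get i) w ∧
    ∀ j : Fin L.length, j < i → ¬ G.Adj (L.get j) w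

/-- The Grundy total domination number of `G`. -/
noncomputable def grundyT {α : Type*} (G : SimpleGraph α) : ℕ :=
  sSup {n | ∃ L : List α, IsOpenLegal G L ∧ L.length = n}

/-- A legal closed neighborhood (dominating) sequence in `G`. -/
def IsClosedLegal {α : Type*} (G : SimpleGraph α) (L : List α) : Prop :=
  L.Nodup ∧ ∀ i : Fin L.length, ∃ w, (G.Adj (L.get i) w ∨ L.get i = w) ∧
    ∀ j : Fin L.length, j < i → ¬ (G.Adj (L.get j) w ∨ L.get j = w)

/-- The Grundy domination number of `G`. -/
noncomputable def grundyDom {α : Type*} (G : SimpleGraph α) : ℕ :=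
  sSup {n | ∃ L : List α, IsClosedLegal G L ∧ L.length = n}

/-- The direct (tensor) product of simple graphs. -/
def directProd {α β : Type*} (G : SimpleGraph α) (H : SimpleGraph β) : SimpleGraph (α × β) where
  Adj x y := G.Adj x.1 y.1 ∧ H.Adj x.2 y.2
  symm := ⟨fun _ _ h => ⟨h.1.symm, h.2.symm⟩⟩
  loopless := ⟨fun x h => G.irrefl h.1⟩

/-- The lexicographic product of simple graphs. -/
def lexProd {α β : Type*} (G : SimpleGraph α) (H : SimpleGraph β) : SimpleGraph (α × β) where
  Adj x y := G.Adj x.1 y.1 ∨ (x.1 = y.1 ∧ H.Adj x.2 y.2)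
  symm := by
    constructor
    rintro x y (h | ⟨h1, h2⟩)
    · exact Or.inl h.symm
    · exact Or.inr ⟨h1.symm, h2.symm⟩
  loopless := by
    constructor
    rintro x (h | ⟨_, h⟩)
    · exact G.irrefl h
    · exact H.irrefl h

/-- The strong product of simple graphs. -/
def strongProd {α β : Type*} (G : SimpleGraph α) (H : SimpleGraph β) : SimpleGraph (α × β) where
  Adj x y := (G.Adj x.1 y.1 ∧ x.2 = y.2) ∨ (x.1 = y.1 ∧ H.Adj x.2 y.2) ∨
    (G.Adj x.1 y.1 ∧ H.Adj x.2 y.2)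
  symm := by
    constructor
    rintro x y (⟨h, e⟩ | ⟨e, h⟩ | ⟨h1, h2⟩)
    · exact Or.inl ⟨h.symm, e.symm⟩
    · exact Or.inr (Or.inl ⟨e.symm, h.symm⟩)
    · exact Or.inr (Or.inr ⟨h1.symm, h2.symm⟩)
  loopless := by
    constructor
    rintro x (⟨h, _⟩ | ⟨_, h⟩ | ⟨h, _⟩)
    · exact G.irrefl h
    · exact H.irrefl h
    · exact G.irrefl h

/-- The minimum number of complete bipartite subgraphs of `G` covering all edges of `G`. -/
noncomputable def bc {α : Type*} (G : SimpleGraph α) : ℕ :=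
  sInf {k | ∃ A B : Fin k → Set α,
    (∀ i a b, a ∈ A i → b ∈ B i → G.Adj a b) ∧
    (∀ u v, G.Adj u v → ∃ i, (u ∈ A i ∧ v ∈ B i) ∨ (v ∈ A i ∧ u ∈ B i))}

/-- `aD G L` is the number of entries of `L` not adjacent to any earlier entry. -/
noncomputable def aD {α : Type*} (G : SimpleGraph α) (L : List α) : ℕ :=
  {i : Fin L.length | ∀ j : Fin L.length, j < i → ¬ G.Adj (L.get j) (L.get i)}.ncard

/-- The vertex cover number of `G`. -/
noncomputable def vertexCoverNum {α : Type*} (G : SimpleGraph α) : ℕ :=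
  sInf {n | ∃ S : Finset α, S.card = n ∧ ∀ u v, G.Adj u v → u ∈ S ∨ v ∈ S}

/-- The independence number of `G`. -/
noncomputable def indepNum {α : Type*} (G : SimpleGraph α) : ℕ :=
  sSup {n | ∃ S : Finset α, S.card = n ∧ ∀ u ∈ S, ∀ v ∈ S, ¬ G.Adj u v}

/-!
Legal sequences of `G` and of `H` multiply, in lexicographic order, to a legal sequence of
`G × H`: if `w` and `z` are new neighbours of `g` and `h`, then `(w, z)` is a new neighbour of
`(g, h)`, since an earlier pair `(g', h')` adjacent to it would either have `g'` before `g` and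
adjacent to `w`, or `g' = g` and `h'` before `h` and adjacent to `z`.
-/

def IsOpenLegalFamily {ι α : Type*} [Preorder ι] (G : SimpleGraph α) (f : ι → α) : Prop :=
  ∀ i, ∃ w, G.Adj (f i) w ∧ ∀ j < i, ¬ G.Adj (f j) w

namespace IsOpenLegalFamily

variable {ι κ α β : Type*} [Preorder ι] [Preorder κ] {G : SimpleGraph α} {H : SimpleGraph β}

theorem comp_strictMono {f : κ → α} (hf : IsOpenLegalFamily G f) {e : ι → κ}
    (he : StrictMono e) : IsOpenLegalFamily G (f ∘ e) := fun i =>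
  let ⟨w, hw, hnew⟩ := hf (e i)
  ⟨w, hw, fun j hj => hnew (e j) (he hj)⟩

theorem directProd_lex {f : ι → α} {g : κ → β} (hf : IsOpenLegalFamily G f)
    (hg : IsOpenLegalFamily H g) :
    IsOpenLegalFamily (directProd G H) fun p : ι ×ₗ κ => (f (ofLex p).1, g (ofLex p).2) := by
  intro p
  obtain ⟨w, hw, hw_new⟩ := hf (ofLex p).1
  obtain ⟨z, hz, hz_new⟩ := hg (ofLex p).2
  refine ⟨(w, z), ⟨hw, hz⟩, fun q hqp ⟨hqw, hqz⟩ => ?_⟩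
  rcases Prod.Lex.lt_iff.1 hqp with hlt | ⟨-, hlt⟩
  · exact hw_new _ hlt hqw
  · exact hz_new _ hlt hqz

end IsOpenLegalFamily

theorem isOpenLegal_ofFn {α : Type*} {G : SimpleGraph α} {n : ℕ} {f : Fin n → α}
    (hinj : Function.Injective f) (hf : IsOpenLegalFamily G f) : IsOpenLegal G (List.ofFn f) := by
  refine ⟨List.nodup_ofFn.2 hinj, ?_⟩
  have hget : (List.ofFn f).get = f ∘ Fin.cast List.length_ofFn := funext (List.get_ofFn f)
  rw [hget]
  exact hf.comp_strictMono (Fin.cast_strictMono _)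

theorem IsOpenLegal.exists_directProd {α β : Type*} {G : SimpleGraph α} {H : SimpleGraph β}
    {L : List α} {M : List β} (hL : IsOpenLegal G L) (hM : IsOpenLegal H M) :
    ∃ P : List (α × β), IsOpenLegal (directProd G H) P ∧ P.length = L.length * M.length := by
  let e : Fin (L.length * M.length) ≃o Fin L.length ×ₗ Fin M.length :=
    Fintype.orderIsoFinOfCardEq _ (by simp)
  let F : Fin L.length ×ₗ Fin M.length → α × β := fun p => (L.get (ofLex p).1, M.get (ofLex p).2)
  have hF : Function.Injective F := fun p q hpq => by
    have h₁ := (hL.1.get_inj_iff).1 (congrArg Prod.fst hpq)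
    have h₂ := (hM.1.get_inj_iff).1 (congrArg Prod.snd hpq)
    exact ofLex.injective (Prod.ext h₁ h₂)
  have hlegal : IsOpenLegalFamily (directProd G H) F :=
    IsOpenLegalFamily.directProd_lex (f := L.get) (g := M.get) hL.2 hM.2
  exact ⟨List.ofFn (F ∘ e), isOpenLegal_ofFn (hF.comp e.injective)
    (hlegal.comp_strictMono e.strictMono), List.length_ofFn⟩

section grundyT

variable {α : Type*} [Fintype α] (G : SimpleGraph α)

theorem bddAbove_openLegal_lengths :
    BddAbove {n | ∃ L : List α, IsOpenLegal G L ∧ L.length = n} :=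
  ⟨Fintype.card α, by rintro n ⟨L, hL, rfl⟩; exact hL.1.length_le_card⟩

theorem exists_isOpenLegal_length_eq_grundyT :
    ∃ L : List α, IsOpenLegal G L ∧ L.length = grundyT G :=
  Nat.sSup_mem (s := {n | ∃ L : List α, IsOpenLegal G L ∧ L.length = n})
    ⟨0, [], ⟨List.nodup_nil, fun i => i.elim0⟩, rfl⟩ (bddAbove_openLegal_lengths G)

variable {G}

theorem IsOpenLegal.length_le_grundyT {L : List α} (hL : IsOpenLegal G L) :
    L.length ≤ grundyT G :=
  le_csSup (bddAbove_openLegal_lengths G) ⟨L, hL, rfl⟩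

end grundyT

theorem grundyT_directProd_ge {α β : Type*} [Fintype α] [Fintype β]
    (G : SimpleGraph α) (H : SimpleGraph β) :
    grundyT G * grundyT H ≤ grundyT (directProd G H) := by
  obtain ⟨L, hL, hL_len⟩ := exists_isOpenLegal_length_eq_grundyT G
  obtain ⟨M, hM, hM_len⟩ := exists_isOpenLegal_length_eq_grundyT H
  obtain ⟨P, hP, hP_len⟩ := hL.exists_directProd hM
  rw [← hL_len, ← hM_len, ← hP_len]
  exact hP.length_le_grundyT
end

section
/- The direct product K_{k1,k2} × K_{ℓ1,ℓ2} of two complete bipartite graphs is isomorphic to the disjoint union of the complete bipartite graphs K_{k1·ℓ1, k2·ℓ2} and K_{k1·ℓ2, k2·ℓ1}. -/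
open SimpleGraph

def sumProdSumEquiv (α₁ α₂ β₁ β₂ : Type*) :
    (α₁ ⊕ α₂) × (β₁ ⊕ β₂) ≃ ((α₁ × β₁) ⊕ (α₂ × β₂)) ⊕ ((α₁ × β₂) ⊕ (α₂ × β₁)) where
  toFun
    | (.inl a, .inl b) => .inl (.inl (a, b))
    | (.inr a, .inr b) => .inl (.inr (a, b))
    | (.inl a, .inr b) => .inr (.inl (a, b))
    | (.inr a, .inl b) => .inr (.inr (a, b))
  invFun
    | .inl (.inl (a, b)) => (.inl a, .inl b)
    | .inl (.inr (a, b)) => (.inr a, .inr b)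
    | .inr (.inl (a, b)) => (.inl a, .inr b)
    | .inr (.inr (a, b)) => (.inr a, .inl b)
  left_inv := by rintro ⟨a | a, b | b⟩ <;> rfl
  right_inv := by rintro ((⟨a, b⟩ | ⟨a, b⟩) | (⟨a, b⟩ | ⟨a, b⟩)) <;> rfl

/-- Two vertices are adjacent in the product iff both coordinates switch sides, which keeps them
in the same summand and moves them to opposite sides of it. -/
def directProdCompleteBipartiteIso (α₁ α₂ β₁ β₂ : Type*) :
    directProd (completeBipartiteGraph α₁ α₂) (completeBipartiteGraph β₁ β₂) ≃g
      completeBipartiteGraph (α₁ × β₁) (α₂ × β₂) ⊕g completeBipartiteGraph (α₁ × β₂) (α₂ × β₁) where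
  toEquiv := sumProdSumEquiv α₁ α₂ β₁ β₂
  map_rel_iff' := by
    rintro ⟨a | a, b | b⟩ ⟨a' | a', b' | b'⟩ <;> simp [sumProdSumEquiv, directProd]

theorem directProd_completeBipartite_iso (k₁ k₂ l₁ l₂ : ℕ) :
    Nonempty ((directProd (completeBipartiteGraph (Fin k₁) (Fin k₂))
        (completeBipartiteGraph (Fin l₁) (Fin l₂))) ≃g
      (completeBipartiteGraph (Fin (k₁ * l₁)) (Fin (k₂ * l₂)) ⊕g
        completeBipartiteGraph (Fin (k₁ * l₂)) (Fin (k₂ * l₁)))) :=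
  ⟨(directProdCompleteBipartiteIso _ _ _ _).trans <|
    Iso.sumCongr (completeBipartiteGraphCongr finProdFinEquiv finProdFinEquiv)
      (completeBipartiteGraphCongr finProdFinEquiv finProdFinEquiv)⟩
end
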